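/- arXiv:0811.0678 — 3 statements merged into one kernel-verified Lean document; each statement's English description precedes it below -/
import Mathlib

section
/- Let u(x) = (2π)^{-1/2} x^{-3/2} e^{-x/2} (Lévy density of the IG(1,1) subordinator) and U⁺(x) = ∫ₓ^∞ u(y)dy = √(2/(πx)) e^{-x/2} - erfc(√(x/2)). Then (U⁺)^{*3}(x) = 2√(2x/π) e^{-x/2}(2+x) - (2x² + 6x) erfc(√(x/2)) for all x > 0. -/
open MeasureTheory Real

/-- Convolution of functions on `(0, ∞)`. -/
noncomputable def conv (f g : ℝ → ℝ) : ℝ → ℝ := fun x => ∫ y in (0:ℝ)..x, f y * g (x - y)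

/-- `n`-fold convolution power (`convPow f 1 = f`). -/
noncomputable def convPow (f : ℝ → ℝ) : ℕ → ℝ → ℝ
  | 0 => fun _ => 0
  | 1 => f
  | n + 2 => conv f (convPow f (n + 1))

/-- The complementary error function. -/
noncomputable def erfc (z : ℝ) : ℝ := (2 / Real.sqrt π) * ∫ t in Set.Ioi z, Real.exp (-t ^ 2)

/-!
Write `U⁺ = a - c` with `a x = √(2/(πx)) e^{-x/2}` and `c x = erfc √(x/2)`, and let
`g x = √(2x/π) e^{-x/2} = x a x` (below: `levyTail`, `invSqrtExp`, `erfcSqrtHalf`, `sqrtExp`).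
Then `c' = -a/2` and `g' = (a - g)/2`, so the primitives of `a`, `c`, `U⁺` and of
`(2x+2) c - 2g` are explicit in `c` and `g`.

The only convolution computed by hand is `a * a = 2 e^{-x/2}`: the factor `1/√(y(x-y))`
integrates to `π` (an arcsine primitive). All others follow from Fubini on the triangle
`0 < y < s < x`, in the form `f * (∫₀ g) = ∫₀ (f * g)`. Since `c = 1 - ½ ∫₀ a`, this gives `a * c`
and `c * c`, hence `U⁺ * U⁺ = (2x+2) c - 2g = 2 - 2 ∫₀ U⁺`, and one more application gives
`(U⁺)^{*3}`.
-/

open Set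

theorem integral_indicator_Ioi_of_le {c a b : ℝ} (hca : c ≤ a) (hab : a ≤ b) (h : ℝ → ℝ) :
    ∫ s in c..b, (Ioi a).indicator h s = ∫ s in a..b, h s := by
  have hset : Ioi a ∩ Ioc c b = Ioc a b := by
    ext s
    simp only [mem_inter_iff, mem_Ioi, mem_Ioc]
    exact ⟨fun h => ⟨h.1, h.2.2⟩, fun h => ⟨h.1, hca.trans_lt h.1, h.2⟩⟩
  rw [intervalIntegral.integral_of_le (hca.trans hab), intervalIntegral.integral_of_le hab,
    integral_indicator measurableSet_Ioi, Measure.restrict_restrict measurableSet_Ioi, hset]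

theorem integral_indicator_Iio_of_le {c a b : ℝ} (hca : c ≤ a) (hab : a ≤ b) (h : ℝ → ℝ) :
    ∫ y in c..b, (Iio a).indicator h y = ∫ y in c..a, h y := by
  have hset : Iio a ∩ Ioc c b = Ioo c a := by
    ext s
    simp only [mem_inter_iff, mem_Iio, mem_Ioc, mem_Ioo]
    exact ⟨fun h => ⟨h.2.1, h.1⟩, fun h => ⟨h.2, h.1, h.2.le.trans hab⟩⟩
  rw [intervalIntegral.integral_of_le (hca.trans hab), intervalIntegral.integral_of_le hca,
    integral_indicator measurableSet_Iio, Measure.restrict_restrict measurableSet_Iio, hset,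
    integral_Ioc_eq_integral_Ioo]

theorem integrableOn_indicator_lt_mul_sub {f g : ℝ → ℝ} {x : ℝ}
    (hf : IntegrableOn f (Ioc 0 x)) (hg : IntegrableOn g (Ioc 0 x)) :
    IntegrableOn ({q : ℝ × ℝ | q.1 < q.2}.indicator fun q => f q.1 * g (q.2 - q.1))
      (Ioc 0 x ×ˢ Ioc 0 x) := by
  have hprod : IntegrableOn (fun q : ℝ × ℝ => f q.1 * g q.2) (Ioc 0 x ×ˢ Ioc 0 x) := by
    rw [IntegrableOn, Measure.volume_eq_prod, ← Measure.prod_restrict]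
    exact hf.mul_prod hg
  have hshear : IntegrableOn (fun q : ℝ × ℝ => f q.1 * g (q.2 - q.1))
      (MeasurableEquiv.shearSubRight ℝ ⁻¹' (Ioc 0 x ×ˢ Ioc 0 x)) := by
    have h := (measurePreserving_prod_sub (volume : Measure ℝ) volume).integrableOn_comp_preimage
      (MeasurableEquiv.shearSubRight ℝ).measurableEmbedding
      (f := fun q : ℝ × ℝ => f q.1 * g q.2) (s := Ioc 0 x ×ˢ Ioc 0 x)
    rw [← Measure.volume_eq_prod] at h
    exact h.2 hprod
  refine (integrableOn_indicator_iff (measurableSet_lt measurable_fst measurable_snd)).2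
    (hshear.mono_set ?_)
  rintro ⟨y, s⟩ ⟨hys, ⟨hy0, -⟩, -, hsx⟩
  change (y, s - y) ∈ Ioc 0 x ×ˢ Ioc 0 x
  simp only [mem_ofPred_eq] at hys hy0 hsx
  exact ⟨⟨hy0, by linarith⟩, sub_pos.2 hys, by linarith⟩

theorem conv_primitive_eq_integral_conv {f g : ℝ → ℝ} {x : ℝ} (hx : 0 ≤ x)
    (hf : IntervalIntegrable f volume 0 x) (hg : IntervalIntegrable g volume 0 x) :
    conv f (fun z => ∫ t in (0:ℝ)..z, g t) x = ∫ s in (0:ℝ)..x, conv f g s := by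
  set K : ℝ → ℝ → ℝ := fun y s =>
    {q : ℝ × ℝ | q.1 < q.2}.indicator (fun q => f q.1 * g (q.2 - q.1)) (y, s)
  have hK_left : ∀ y s, K y s = (Ioi y).indicator (fun s => f y * g (s - y)) s := by
    intro y s
    simp only [K, indicator_apply, mem_ofPred_eq, mem_Ioi]
  have hK_right : ∀ y s, K y s = (Iio s).indicator (fun y => f y * g (s - y)) y := by
    intro y s
    simp only [K, indicator_apply, mem_ofPred_eq, mem_Iio]
  calc conv f (fun z => ∫ t in (0:ℝ)..z, g t) x
      = ∫ y in (0:ℝ)..x, ∫ s in (0:ℝ)..x, K y s := by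
        refine intervalIntegral.integral_congr fun y hy => ?_
        rw [uIcc_of_le hx] at hy
        rw [funext (hK_left y), integral_indicator_Ioi_of_le hy.1 hy.2,
          intervalIntegral.integral_const_mul, intervalIntegral.integral_comp_sub_right, sub_self]
    _ = ∫ s in (0:ℝ)..x, ∫ y in (0:ℝ)..x, K y s := by
        refine intervalIntegral_intervalIntegral_swap ?_
        rw [uIoc_of_le hx]
        exact integrableOn_indicator_lt_mul_sub
          ((intervalIntegrable_iff_integrableOn_Ioc_of_le hx).1 hf)
          ((intervalIntegrable_iff_integrableOn_Ioc_of_le hx).1 hg)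
    _ = ∫ s in (0:ℝ)..x, conv f g s := by
        refine intervalIntegral.integral_congr fun s hs => ?_
        rw [uIcc_of_le hx] at hs
        simp only [hK_right, integral_indicator_Iio_of_le hs.1 hs.2, conv]

theorem conv_eq_of_eqOn_primitive {f g G : ℝ → ℝ} {x α β : ℝ} (hx : 0 ≤ x)
    (hf : IntervalIntegrable f volume 0 x) (hg : IntervalIntegrable g volume 0 x)
    (hG : EqOn G (fun z => α + β * ∫ t in (0:ℝ)..z, g t) (Ioo 0 x)) :
    conv f G x = α * (∫ y in (0:ℝ)..x, f y) + β * ∫ s in (0:ℝ)..x, conv f g s := by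
  have hPg : ContinuousOn (fun y => ∫ t in (0:ℝ)..(x - y), g t) (uIcc 0 x) := by
    refine (intervalIntegral.continuousOn_primitive_interval' hg left_mem_uIcc).comp
      (continuousOn_const.sub continuousOn_id) fun y hy => ?_
    rw [uIcc_of_le hx] at hy ⊢
    exact ⟨by linarith [hy.2], by linarith [hy.1]⟩
  calc conv f G x
      = ∫ y in (0:ℝ)..x, (α * f y + β * (f y * ∫ t in (0:ℝ)..(x - y), g t)) := by
        refine intervalIntegral.integral_congr_uIoo fun y hy => ?_
        rw [uIoo_of_le hx] at hy
        simp only [hG ⟨sub_pos.2 hy.2, by linarith [hy.1]⟩]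
        ring
    _ = α * (∫ y in (0:ℝ)..x, f y) + β * conv f (fun z => ∫ t in (0:ℝ)..z, g t) x := by
        rw [intervalIntegral.integral_add (hf.const_mul α) ((hf.mul_continuousOn hPg).const_mul β),
          intervalIntegral.integral_const_mul, intervalIntegral.integral_const_mul]
        rfl
    _ = α * (∫ y in (0:ℝ)..x, f y) + β * ∫ s in (0:ℝ)..x, conv f g s := by
        rw [conv_primitive_eq_integral_conv hx hf hg]

theorem conv_comm (f g : ℝ → ℝ) (x : ℝ) : conv f g x = conv g f x := by
  have h := intervalIntegral.integral_comp_sub_left (fun y => g y * f (x - y)) x (a := 0) (b := x)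
  simp only [sub_zero, sub_self, sub_sub_cancel] at h
  simp only [conv, ← h, mul_comm]

theorem conv_sub_sub {f₁ f₂ g₁ g₂ : ℝ → ℝ} {x : ℝ}
    (h₁₁ : IntervalIntegrable (fun y => f₁ y * g₁ (x - y)) volume 0 x)
    (h₁₂ : IntervalIntegrable (fun y => f₁ y * g₂ (x - y)) volume 0 x)
    (h₂₁ : IntervalIntegrable (fun y => f₂ y * g₁ (x - y)) volume 0 x)
    (h₂₂ : IntervalIntegrable (fun y => f₂ y * g₂ (x - y)) volume 0 x) :
    conv (f₁ - f₂) (g₁ - g₂) x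
      = conv f₁ g₁ x - conv f₁ g₂ x - conv f₂ g₁ x + conv f₂ g₂ x := by
  have hexpand : conv (f₁ - f₂) (g₁ - g₂) x = ∫ y in (0:ℝ)..x,
      (f₁ y * g₁ (x - y) - f₁ y * g₂ (x - y) - (f₂ y * g₁ (x - y) - f₂ y * g₂ (x - y))) :=
    intervalIntegral.integral_congr fun y _ => by simp only [Pi.sub_apply]; ring
  rw [hexpand, intervalIntegral.integral_sub (h₁₁.sub h₁₂) (h₂₁.sub h₂₂),
    intervalIntegral.integral_sub h₁₁ h₁₂, intervalIntegral.integral_sub h₂₁ h₂₂]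
  simp only [conv]
  ring

theorem erfc_eq_one_sub (z : ℝ) : erfc z = 1 - 2 / √π * ∫ t in (0:ℝ)..z, exp (-t ^ 2) := by
  have hint : Integrable fun t : ℝ => exp (-t ^ 2) := by
    simpa using integrable_exp_neg_mul_sq (b := 1) one_pos
  have hsplit := intervalIntegral.integral_interval_add_Ioi (a := 0) (b := z) hint.integrableOn
    hint.integrableOn
  have hhalf : ∫ t in Ioi (0:ℝ), exp (-t ^ 2) = √π / 2 := by
    simpa using integral_gaussian_Ioi 1
  have : √π ≠ 0 := by positivity
  rw [erfc, ← sub_eq_of_eq_add' hsplit.symm, hhalf]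
  field_simp

theorem hasDerivAt_erfc (z : ℝ) : HasDerivAt erfc (-(2 / √π) * exp (-z ^ 2)) z := by
  have hcont : Continuous fun t : ℝ => exp (-t ^ 2) := by fun_prop
  have h := ((hcont.integral_hasStrictDerivAt 0 z).hasDerivAt.const_mul (2 / √π)).const_sub 1
  rw [← funext erfc_eq_one_sub] at h
  simpa only [neg_mul] using h

theorem continuous_erfc : Continuous erfc :=
  continuous_iff_continuousAt.2 fun z => (hasDerivAt_erfc z).continuousAt

theorem erfc_zero : erfc 0 = 1 := by simp [erfc_eq_one_sub]

theorem hasDerivAt_two_mul_arcsin_sqrt_div {x y : ℝ} (hy : y ∈ Ioo 0 x) :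
    HasDerivAt (fun y => 2 * arcsin √(y / x)) (1 / √(y * (x - y))) y := by
  obtain ⟨hy0, hyx⟩ := hy
  have hx : 0 < x := hy0.trans hyx
  have hsqrt : HasDerivAt (fun y => √(y / x)) (1 / (2 * √(y / x)) * (1 / x)) y :=
    (Real.hasDerivAt_sqrt (by positivity)).comp y (by simpa using (hasDerivAt_id y).div_const x)
  have hlt : √(y / x) < 1 :=
    (Real.sqrt_lt' one_pos).2 (by rw [one_pow]; exact (div_lt_one hx).2 hyx)
  refine (((Real.hasDerivAt_arcsin (by linarith [Real.sqrt_nonneg (y / x)]) hlt.ne).comp y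
    hsqrt).const_mul 2).congr_deriv ?_
  have hxy : 0 < (x - y) / x := div_pos (by linarith) hx
  rw [Real.sq_sqrt (by positivity), show 1 - y / x = (x - y) / x by field_simp,
    show y * (x - y) = x ^ 2 * ((x - y) / x * (y / x)) by field_simp,
    Real.sqrt_mul (by positivity), Real.sqrt_sq hx.le, Real.sqrt_mul hxy.le]
  have : 0 < √(y / x) := Real.sqrt_pos.2 (by positivity)
  have : 0 < √((x - y) / x) := Real.sqrt_pos.2 hxy
  field_simp

theorem intervalIntegrable_one_div_sqrt_mul_sub {x : ℝ} (hx : 0 ≤ x) :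
    IntervalIntegrable (fun y => 1 / √(y * (x - y))) volume 0 x := by
  refine intervalIntegral.intervalIntegrable_deriv_of_nonneg (g := fun y => 2 * arcsin √(y / x))
    (by fun_prop) (fun y hy => hasDerivAt_two_mul_arcsin_sqrt_div ?_) (fun y _ => by positivity)
  simpa [hx] using hy

theorem integral_one_div_sqrt_mul_sub {x : ℝ} (hx : 0 < x) :
    ∫ y in (0:ℝ)..x, 1 / √(y * (x - y)) = π := by
  rw [intervalIntegral.integral_eq_sub_of_hasDerivAt_of_le hx.le (by fun_prop)
    (fun y hy => hasDerivAt_two_mul_arcsin_sqrt_div hy)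
    (intervalIntegrable_one_div_sqrt_mul_sub hx.le)]
  simp only [div_self hx.ne', sqrt_one, arcsin_one, zero_div, sqrt_zero, arcsin_zero, mul_zero,
    sub_zero]
  ring

theorem integral_exp_neg_half {x : ℝ} (hx : 0 ≤ x) :
    ∫ s in (0:ℝ)..x, exp (-s / 2) = 2 - 2 * exp (-x / 2) := by
  rw [intervalIntegral.integral_eq_sub_of_hasDerivAt_of_le (f := fun s => -2 * exp (-s / 2)) hx
    (by fun_prop) (fun s _ => ?_)
    ((by fun_prop : Continuous fun s : ℝ => exp (-s / 2)).intervalIntegrable 0 x)]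
  · simp only [neg_mul, neg_zero, zero_div, exp_zero, mul_one, sub_neg_eq_add]
    ring
  exact (((Real.hasDerivAt_exp _).comp s
    (by simpa using (hasDerivAt_id s).neg.div_const 2)).const_mul (-2)).congr_deriv (by ring)

noncomputable def invSqrtExp (x : ℝ) : ℝ := √(2 / (π * x)) * exp (-x / 2)

noncomputable def sqrtExp (x : ℝ) : ℝ := √(2 * x / π) * exp (-x / 2)

noncomputable def erfcSqrtHalf (x : ℝ) : ℝ := erfc √(x / 2)

noncomputable def levyTail : ℝ → ℝ := invSqrtExp - erfcSqrtHalf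

theorem invSqrtExp_nonneg (x : ℝ) : 0 ≤ invSqrtExp x := by
  unfold invSqrtExp
  positivity

theorem sqrtExp_eq_mul_invSqrtExp {x : ℝ} (hx : 0 < x) : sqrtExp x = x * invSqrtExp x := by
  rw [sqrtExp, invSqrtExp, ← mul_assoc, show 2 * x / π = x ^ 2 * (2 / (π * x)) by field_simp,
    Real.sqrt_mul (sq_nonneg x), Real.sqrt_sq hx.le]

@[fun_prop]
theorem continuous_sqrtExp : Continuous sqrtExp := by
  unfold sqrtExp
  fun_prop

@[fun_prop]
theorem continuous_erfcSqrtHalf : Continuous erfcSqrtHalf :=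
  continuous_erfc.comp (by fun_prop)

theorem erfcSqrtHalf_zero : erfcSqrtHalf 0 = 1 := by simp [erfcSqrtHalf, erfc_zero]

theorem hasDerivAt_erfcSqrtHalf {x : ℝ} (hx : 0 < x) :
    HasDerivAt erfcSqrtHalf (-invSqrtExp x / 2) x := by
  have hsqrt : HasDerivAt (fun x => √(x / 2)) (1 / (2 * √(x / 2)) * (1 / 2)) x :=
    (Real.hasDerivAt_sqrt (by positivity)).comp x ((hasDerivAt_id x).div_const 2)
  refine ((hasDerivAt_erfc _).comp x hsqrt).congr_deriv ?_
  rw [invSqrtExp, Real.sq_sqrt (by positivity), show 2 / (π * x) = (√π * √(x / 2))⁻¹ ^ 2 by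
    rw [inv_pow, mul_pow, Real.sq_sqrt (by positivity), Real.sq_sqrt (by positivity)]
    field_simp]
  rw [Real.sqrt_sq (by positivity)]
  field_simp

theorem hasDerivAt_sqrtExp {x : ℝ} (hx : 0 < x) :
    HasDerivAt sqrtExp (invSqrtExp x / 2 - sqrtExp x / 2) x := by
  have hsqrt : HasDerivAt (fun x => √(2 * x / π)) (1 / (2 * √(2 * x / π)) * (2 / π)) x := by
    refine (Real.hasDerivAt_sqrt (by positivity)).comp x ?_
    simpa using ((hasDerivAt_id x).const_mul 2).div_const π
  have hexp : HasDerivAt (fun x => exp (-x / 2)) (exp (-x / 2) * (-1 / 2)) x :=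
    (Real.hasDerivAt_exp _).comp x (by simpa using (hasDerivAt_id x).neg.div_const 2)
  refine (hsqrt.mul hexp).congr_deriv ?_
  rw [invSqrtExp, sqrtExp, show 2 / (π * x) = (2 / π / √(2 * x / π)) ^ 2 by
    rw [div_pow, Real.sq_sqrt (by positivity)]
    field_simp]
  rw [Real.sqrt_sq (by positivity)]
  field_simp
  ring

theorem hasDerivAt_two_sub_two_mul_erfcSqrtHalf {x : ℝ} (hx : 0 < x) :
    HasDerivAt (fun y => 2 - 2 * erfcSqrtHalf y) (invSqrtExp x) x :=
  (((hasDerivAt_erfcSqrtHalf hx).const_mul 2).const_sub 2).congr_deriv (by ring)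

theorem intervalIntegrable_invSqrtExp {x : ℝ} (hx : 0 ≤ x) :
    IntervalIntegrable invSqrtExp volume 0 x := by
  refine intervalIntegral.intervalIntegrable_deriv_of_nonneg (by fun_prop)
    (fun y hy => hasDerivAt_two_sub_two_mul_erfcSqrtHalf ?_) (fun y _ => invSqrtExp_nonneg y)
  simpa [hx] using hy.1

theorem integral_invSqrtExp {x : ℝ} (hx : 0 ≤ x) :
    ∫ y in (0:ℝ)..x, invSqrtExp y = 2 - 2 * erfcSqrtHalf x := by
  rw [intervalIntegral.integral_eq_sub_of_hasDerivAt_of_le hx (by fun_prop)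
    (fun y hy => hasDerivAt_two_sub_two_mul_erfcSqrtHalf hy.1) (intervalIntegrable_invSqrtExp hx),
    erfcSqrtHalf_zero]
  ring

theorem integral_erfcSqrtHalf {x : ℝ} (hx : 0 ≤ x) :
    ∫ y in (0:ℝ)..x, erfcSqrtHalf y = (x - 1) * erfcSqrtHalf x - sqrtExp x + 1 := by
  rw [intervalIntegral.integral_eq_sub_of_hasDerivAt_of_le
    (f := fun y => (y - 1) * erfcSqrtHalf y - sqrtExp y) hx (by fun_prop) (fun y hy => ?_)
    (continuous_erfcSqrtHalf.intervalIntegrable 0 x)]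
  · simp [erfcSqrtHalf_zero, sqrtExp]
  refine ((((hasDerivAt_id y).sub_const 1).mul (hasDerivAt_erfcSqrtHalf hy.1)).sub
    (hasDerivAt_sqrtExp hy.1)).congr_deriv ?_
  simp only [id_eq]
  linear_combination (1 / 2 : ℝ) * sqrtExp_eq_mul_invSqrtExp hy.1

theorem intervalIntegrable_levyTail {x : ℝ} (hx : 0 ≤ x) :
    IntervalIntegrable levyTail volume 0 x :=
  (intervalIntegrable_invSqrtExp hx).sub (continuous_erfcSqrtHalf.intervalIntegrable 0 x)

theorem integral_levyTail {x : ℝ} (hx : 0 ≤ x) :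
    ∫ y in (0:ℝ)..x, levyTail y = 1 - (x + 1) * erfcSqrtHalf x + sqrtExp x := by
  simp only [levyTail, Pi.sub_apply]
  rw [intervalIntegral.integral_sub (intervalIntegrable_invSqrtExp hx)
    (continuous_erfcSqrtHalf.intervalIntegrable 0 x), integral_invSqrtExp hx,
    integral_erfcSqrtHalf hx]
  ring

theorem invSqrtExp_mul_invSqrtExp_sub {x y : ℝ} (hy : y ∈ Icc 0 x) :
    invSqrtExp y * invSqrtExp (x - y) = 2 / π * exp (-x / 2) * (1 / √(y * (x - y))) := by
  have hexp : exp (-y / 2) * exp (-(x - y) / 2) = exp (-x / 2) := by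
    rw [← Real.exp_add]
    ring_nf
  have hsqrt : √(2 / (π * y)) * √(2 / (π * (x - y))) = 2 / π * (1 / √(y * (x - y))) := by
    rw [← Real.sqrt_mul (by have := hy.1; positivity),
      show 2 / (π * y) * (2 / (π * (x - y))) = (2 / π) ^ 2 * (y * (x - y))⁻¹ by
        simp only [div_eq_mul_inv, mul_inv]; ring,
      Real.sqrt_mul (by positivity), Real.sqrt_sq (by positivity), Real.sqrt_inv, one_div]
  rw [invSqrtExp, invSqrtExp, ← hexp]
  linear_combination exp (-y / 2) * exp (-(x - y) / 2) * hsqrt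

theorem intervalIntegrable_invSqrtExp_mul_sub {x : ℝ} (hx : 0 ≤ x) :
    IntervalIntegrable (fun y => invSqrtExp y * invSqrtExp (x - y)) volume 0 x :=
  ((intervalIntegrable_one_div_sqrt_mul_sub hx).const_mul _).congr fun _ hy =>
    (invSqrtExp_mul_invSqrtExp_sub (uIoc_subset_uIcc.trans (uIcc_of_le hx).subset hy)).symm

theorem conv_invSqrtExp_self {x : ℝ} (hx : 0 < x) :
    conv invSqrtExp invSqrtExp x = 2 * exp (-x / 2) := by
  rw [conv, intervalIntegral.integral_congr fun y hy =>
      invSqrtExp_mul_invSqrtExp_sub ((uIcc_of_le hx.le).subset hy),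
    intervalIntegral.integral_const_mul, integral_one_div_sqrt_mul_sub hx]
  field_simp

theorem conv_invSqrtExp_erfcSqrtHalf {x : ℝ} (hx : 0 ≤ x) :
    conv invSqrtExp erfcSqrtHalf x = 2 * exp (-x / 2) - 2 * erfcSqrtHalf x := by
  have ha := intervalIntegrable_invSqrtExp hx
  rw [conv_eq_of_eqOn_primitive (α := 1) (β := -1 / 2) hx ha ha fun z hz => by
      simp only [integral_invSqrtExp hz.1.le]; ring,
    integral_invSqrtExp hx, intervalIntegral.integral_congr_uIoo (g := fun s => 2 * exp (-s / 2))
      fun s hs => conv_invSqrtExp_self (by rw [uIoo_of_le hx] at hs; exact hs.1),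
    intervalIntegral.integral_const_mul, integral_exp_neg_half hx]
  ring

theorem conv_erfcSqrtHalf_self {x : ℝ} (hx : 0 ≤ x) :
    conv erfcSqrtHalf erfcSqrtHalf x
      = 2 * (x - 1) * erfcSqrtHalf x - 2 * sqrtExp x + 2 * exp (-x / 2) := by
  have hc : IntervalIntegrable erfcSqrtHalf volume 0 x :=
    continuous_erfcSqrtHalf.intervalIntegrable 0 x
  have he : IntervalIntegrable (fun s => 2 * exp (-s / 2)) volume 0 x :=
    (by fun_prop : Continuous fun s : ℝ => 2 * exp (-s / 2)).intervalIntegrable 0 x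
  rw [conv_eq_of_eqOn_primitive (α := 1) (β := -1 / 2) hx hc (intervalIntegrable_invSqrtExp hx)
      fun z hz => by simp only [integral_invSqrtExp hz.1.le]; ring,
    intervalIntegral.integral_congr (f := fun s => conv erfcSqrtHalf invSqrtExp s)
      (g := fun s => 2 * exp (-s / 2) - 2 * erfcSqrtHalf s) fun s hs => by
        dsimp only
        rw [conv_comm, conv_invSqrtExp_erfcSqrtHalf ((uIcc_of_le hx).subset hs).1],
    intervalIntegral.integral_sub he (hc.const_mul 2), intervalIntegral.integral_const_mul,
    intervalIntegral.integral_const_mul, integral_exp_neg_half hx, integral_erfcSqrtHalf hx]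
  ring

theorem conv_levyTail_self {x : ℝ} (hx : 0 < x) :
    conv levyTail levyTail x = (2 * x + 2) * erfcSqrtHalf x - 2 * sqrtExp x := by
  have ha := intervalIntegrable_invSqrtExp hx.le
  have ha' : IntervalIntegrable (fun y => invSqrtExp (x - y)) volume 0 x := by
    simpa using (ha.comp_sub_left x).symm
  have hc : Continuous fun y => erfcSqrtHalf (x - y) := by fun_prop
  rw [levyTail, conv_sub_sub (intervalIntegrable_invSqrtExp_mul_sub hx.le)
      (ha.mul_continuousOn hc.continuousOn)
      (ha'.continuousOn_mul continuous_erfcSqrtHalf.continuousOn)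
      ((continuous_erfcSqrtHalf.mul hc).intervalIntegrable 0 x),
    conv_comm erfcSqrtHalf, conv_invSqrtExp_self hx, conv_invSqrtExp_erfcSqrtHalf hx.le,
    conv_erfcSqrtHalf_self hx.le]
  ring

theorem integral_conv_levyTail_self {x : ℝ} (hx : 0 ≤ x) :
    ∫ s in (0:ℝ)..x, conv levyTail levyTail s
      = (x ^ 2 + 2 * x - 1) * erfcSqrtHalf x - (x + 1) * sqrtExp x + 1 := by
  have hcont : Continuous fun s => (2 * s + 2) * erfcSqrtHalf s - 2 * sqrtExp s := by fun_prop
  rw [intervalIntegral.integral_congr_uIoo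
      (g := fun s => (2 * s + 2) * erfcSqrtHalf s - 2 * sqrtExp s)
      fun s hs => conv_levyTail_self (by rw [uIoo_of_le hx] at hs; exact hs.1),
    intervalIntegral.integral_eq_sub_of_hasDerivAt_of_le
      (f := fun s => (s ^ 2 + 2 * s - 1) * erfcSqrtHalf s - (s + 1) * sqrtExp s) hx
      (by fun_prop) (fun s hs => ?_) (hcont.intervalIntegrable 0 x)]
  · simp [erfcSqrtHalf_zero, sqrtExp]
  refine (((((hasDerivAt_pow 2 s).add ((hasDerivAt_id s).const_mul 2)).sub_const 1).mul
    (hasDerivAt_erfcSqrtHalf hs.1)).sub (((hasDerivAt_id s).add_const 1).mul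
    (hasDerivAt_sqrtExp hs.1))).congr_deriv ?_
  simp only [id_eq, Pi.add_apply]
  linear_combination (s + 3) / 2 * sqrtExp_eq_mul_invSqrtExp hs.1

theorem convPow_levyTail_three {x : ℝ} (hx : 0 < x) :
    convPow levyTail 3 x = 2 * sqrtExp x * (2 + x) - (2 * x ^ 2 + 6 * x) * erfcSqrtHalf x := by
  have hU := intervalIntegrable_levyTail hx.le
  change conv levyTail (conv levyTail levyTail) x = _
  rw [conv_eq_of_eqOn_primitive (α := 2) (β := -2) hx.le hU hU fun z hz => by
      simp only [conv_levyTail_self hz.1, integral_levyTail hz.1.le]; ring,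
    integral_levyTail hx.le, integral_conv_levyTail_self hx.le]
  ring

theorem stmt11 (U : ℝ → ℝ)
    (hU : ∀ x : ℝ, U x = Real.sqrt (2 / (π * x)) * Real.exp (-x / 2) - erfc (Real.sqrt (x / 2)))
    (x : ℝ) (hx : 0 < x) :
    convPow U 3 x =
      2 * Real.sqrt (2 * x / π) * Real.exp (-x / 2) * (2 + x)
        - (2 * x ^ 2 + 6 * x) * erfc (Real.sqrt (x / 2)) := by
  obtain rfl : U = levyTail := funext hU
  rw [convPow_levyTail_three hx, sqrtExp, erfcSqrtHalf]
  ring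
end

section
/- Suppose u : (0,∞) → [0,∞) is such that x ↦ x u(x) is completely monotone and ∫₀^∞ min(1,x) u(x) dx < ∞. Then for every n ∈ ℕ and every r > 0, ∫₀^∞ e^{-rx} x^{k+1} |u^{(k)}(x)| dx < ∞ for k = 0, 1, …, n. -/
open MeasureTheory Real Set Filter

private lemma aux_contDiffOn_iteratedDeriv {f : ℝ → ℝ} {s : Set ℝ} (hs : IsOpen s)
    (hf : ContDiffOn ℝ (⊤ : ℕ∞) f s) : ∀ k : ℕ, ContDiffOn ℝ (⊤ : ℕ∞) (iteratedDeriv k f) s := by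
  intro k
  induction k with
  | zero => simpa [iteratedDeriv_zero] using hf
  | succ k ih =>
    rw [iteratedDeriv_succ]
    exact ih.deriv_of_isOpen hs (by simp)

private lemma aux_diffAt {f : ℝ → ℝ} {s : Set ℝ} (hs : IsOpen s)
    (hf : ContDiffOn ℝ (⊤ : ℕ∞) f s) {x : ℝ} (hx : x ∈ s) : DifferentiableAt ℝ f x :=
  ((hf.differentiableOn (by simp)) x hx).differentiableAt (hs.mem_nhds hx)

theorem stmt14 (u : ℝ → ℝ) (hnn : ∀ x : ℝ, 0 < x → 0 ≤ u x)
    (hsmooth : ContDiffOn ℝ (⊤ : ℕ∞) (fun x => x * u x) (Set.Ioi 0))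
    (hCM : ∀ (n : ℕ) (x : ℝ), 0 < x → 0 ≤ (-1 : ℝ) ^ n * iteratedDeriv n (fun y => y * u y) x)
    (hint : IntegrableOn (fun x => min 1 x * u x) (Set.Ioi 0)) :
    ∀ (n : ℕ) (r : ℝ), 0 < r → ∀ k ≤ n,
      IntegrableOn (fun x => Real.exp (-r * x) * x ^ (k + 1) * |iteratedDeriv k u x|) (Set.Ioi 0) := by
  set v : ℝ → ℝ := fun x => x * u x with hv
  have hopen : IsOpen (Set.Ioi (0:ℝ)) := isOpen_Ioi
  have hvdiffAt : ∀ (k : ℕ) {x : ℝ}, x ∈ Set.Ioi (0:ℝ) → DifferentiableAt ℝ (iteratedDeriv k v) x :=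
    fun k x hx => aux_diffAt hopen (aux_contDiffOn_iteratedDeriv hopen hsmooth k) hx
  have husmooth : ContDiffOn ℝ (⊤ : ℕ∞) u (Set.Ioi 0) := by
    have h1 : ContDiffOn ℝ (⊤ : ℕ∞) (fun x : ℝ => x⁻¹ * v x) (Set.Ioi 0) :=
      ContDiffOn.mul (contDiffOn_id.inv fun x hx => ne_of_gt hx) hsmooth
    refine h1.congr fun x hx => ?_
    have hx0 : x ≠ 0 := ne_of_gt hx
    simp only [hv]
    rw [inv_mul_cancel_left₀ hx0]
  have hudiffAt : ∀ (k : ℕ) {x : ℝ}, x ∈ Set.Ioi (0:ℝ) → DifferentiableAt ℝ (iteratedDeriv k u) x :=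
    fun k x hx => aux_diffAt hopen (aux_contDiffOn_iteratedDeriv hopen husmooth k) hx
  have keyu : ∀ (k : ℕ) {x : ℝ}, x ∈ Set.Ioi (0:ℝ) →
      HasDerivAt (iteratedDeriv k u) (iteratedDeriv (k+1) u x) x := by
    intro k x hx
    have h := (hudiffAt k hx).hasDerivAt
    rwa [← iteratedDeriv_succ] at h
  have keyv : ∀ (k : ℕ) {x : ℝ}, x ∈ Set.Ioi (0:ℝ) →
      HasDerivAt (iteratedDeriv k v) (iteratedDeriv (k+1) v x) x := by
    intro k x hx
    have h := (hvdiffAt k hx).hasDerivAt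
    rwa [← iteratedDeriv_succ] at h
  -- the Leibniz identity : (x u)⁽ᵏ⁺¹⁾ = x u⁽ᵏ⁺¹⁾ + (k+1) u⁽ᵏ⁾ on (0,∞)
  have hL : ∀ (k : ℕ) (x : ℝ), x ∈ Set.Ioi (0:ℝ) →
      iteratedDeriv (k+1) v x = x * iteratedDeriv (k+1) u x + ((k:ℝ)+1) * iteratedDeriv k u x := by
    intro k
    induction k with
    | zero =>
      intro x hx
      have hdu : HasDerivAt u (iteratedDeriv 1 u x) x := by
        simpa [iteratedDeriv_zero] using keyu 0 hx
      have h1 : HasDerivAt (fun y : ℝ => y * u y) (1 * u x + x * iteratedDeriv 1 u x) x :=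
        (hasDerivAt_id x).mul hdu
      have h2 : iteratedDeriv 1 v x = 1 * u x + x * iteratedDeriv 1 u x := by
        rw [iteratedDeriv_one]
        exact h1.deriv
      rw [h2]
      simp [iteratedDeriv_zero]
      ring
    | succ k ih =>
      intro x hx
      have hev : iteratedDeriv (k+1) v =ᶠ[nhds x]
          (fun y => y * iteratedDeriv (k+1) u y + ((k:ℝ)+1) * iteratedDeriv k u y) :=
        Filter.eventuallyEq_of_mem (hopen.mem_nhds hx) (fun y hy => ih y hy)
      have hR : HasDerivAt
          (fun y => y * iteratedDeriv (k+1) u y + ((k:ℝ)+1) * iteratedDeriv k u y)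
          ((1 * iteratedDeriv (k+1) u x + x * iteratedDeriv (k+1+1) u x)
            + ((k:ℝ)+1) * iteratedDeriv (k+1) u x) x :=
        ((hasDerivAt_id x).mul (keyu (k+1) hx)).add ((keyu k hx).const_mul ((k:ℝ)+1))
      rw [iteratedDeriv_succ (n := k+1) (f := v), hev.deriv_eq, hR.deriv]
      push_cast
      ring
  -- antitonicity of (-1)^k v⁽ᵏ⁾ on (0,∞)
  have hganti : ∀ k : ℕ, AntitoneOn (fun y => (-1:ℝ)^k * iteratedDeriv k v y) (Set.Ioi 0) := by
    intro k
    refine antitoneOn_of_deriv_nonpos (convex_Ioi 0) ?_ ?_ ?_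
    · exact fun x hx => ((hvdiffAt k hx).const_mul _).continuousAt.continuousWithinAt
    · intro x hx
      rw [interior_Ioi] at hx
      exact ((hvdiffAt k hx).const_mul ((-1:ℝ)^k)).differentiableWithinAt
    · intro x hx
      rw [interior_Ioi] at hx
      have hd : deriv (fun y => (-1:ℝ)^k * iteratedDeriv k v y) x
          = (-1:ℝ)^k * iteratedDeriv (k+1) v x := ((keyv k hx).const_mul ((-1:ℝ)^k)).deriv
      rw [hd]
      have h2 : (0:ℝ) ≤ (-1:ℝ)^k * (-1) * iteratedDeriv (k+1) v x := by
        rw [← pow_succ]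
        exact hCM (k+1) x hx
      nlinarith [h2]
  have hvanti : AntitoneOn v (Set.Ioi 0) := by
    have h := hganti 0
    simpa [iteratedDeriv_zero] using h
  have hvnn : ∀ x : ℝ, x ∈ Set.Ioi (0:ℝ) → 0 ≤ v x := by
    intro x hx
    simp only [hv]
    exact mul_nonneg (le_of_lt hx) (hnn x hx)
  -- decay bound on derivatives of v
  have hB : ∀ k : ℕ, ∃ C : ℝ, 0 ≤ C ∧ ∀ x ∈ Set.Ioi (0:ℝ),
      x ^ k * ((-1:ℝ)^k * iteratedDeriv k v x) ≤ C * v (x / 2 ^ k) := by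
    intro k
    induction k with
    | zero =>
      refine ⟨1, zero_le_one, fun x hx => ?_⟩
      simp [iteratedDeriv_zero]
    | succ k ih =>
      obtain ⟨C, hC0, hC⟩ := ih
      refine ⟨2 ^ (k+1) * C, by positivity, fun x hx => ?_⟩
      have hx0 : (0:ℝ) < x := hx
      have hx2 : (0:ℝ) < x / 2 := by linarith
      have hcont : ContinuousOn (fun y => (-1:ℝ)^k * iteratedDeriv k v y) (Set.Icc (x/2) x) := by
        intro y hy
        have hy0 : y ∈ Set.Ioi (0:ℝ) := lt_of_lt_of_le hx2 hy.1
        exact ((hvdiffAt k hy0).const_mul _).continuousAt.continuousWithinAt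
      obtain ⟨c, hc, hceq⟩ := exists_hasDerivAt_eq_slope
        (fun y => (-1:ℝ)^k * iteratedDeriv k v y)
        (fun y => (-1:ℝ)^k * iteratedDeriv (k+1) v y)
        (by linarith : x/2 < x) hcont
        (fun y hy => (keyv k (show y ∈ Set.Ioi (0:ℝ) from lt_trans hx2 hy.1)).const_mul ((-1:ℝ)^k))
      have hcmem : c ∈ Set.Ioi (0:ℝ) := lt_trans hx2 hc.1
      set a : ℝ := (-1:ℝ)^k * iteratedDeriv k v (x/2) with ha
      set b : ℝ := (-1:ℝ)^k * iteratedDeriv k v x with hb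
      have ha_nn : 0 ≤ a := hCM k (x/2) hx2
      have hb_nn : 0 ≤ b := hCM k x hx0
      have e0 : (-1:ℝ)^(k+1) * iteratedDeriv (k+1) v c = (a - b)/(x/2) := by
        have hxx : x - x/2 = x/2 := by ring
        rw [hxx] at hceq
        calc (-1:ℝ)^(k+1) * iteratedDeriv (k+1) v c
            = -((-1:ℝ)^k * iteratedDeriv (k+1) v c) := by ring
          _ = -((b - a)/(x/2)) := by rw [hceq]
          _ = (a - b)/(x/2) := by ring
      have e1 : (-1:ℝ)^(k+1) * iteratedDeriv (k+1) v x ≤ (a - b)/(x/2) := by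
        have := hganti (k+1) hcmem hx (le_of_lt hc.2)
        simpa [e0] using this
      have e2 : (a - b)/(x/2) ≤ a/(x/2) := by
        rw [div_le_div_iff₀ hx2 hx2]
        nlinarith
      have key : x^(k+1) * ((-1:ℝ)^(k+1) * iteratedDeriv (k+1) v x) ≤ x^(k+1) * (a / (x/2)) :=
        mul_le_mul_of_nonneg_left (e1.trans e2) (pow_nonneg hx0.le _)
      have e3 : x^(k+1) * (a/(x/2)) = 2^(k+1) * ((x/2)^k * a) := by
        field_simp
        have h2k : ((1:ℝ)/2)^k * 2^k = 1 := by rw [← mul_pow]; norm_num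
        linear_combination (-(x * x^k * a * 2)) * h2k
      have e4 : (x/2)^k * a ≤ C * v (x/2 / 2^k) := hC (x/2) hx2
      have e5 : x/2/(2:ℝ)^k = x / 2^(k+1) := by
        rw [div_div, ← pow_succ']
      calc x^(k+1) * ((-1:ℝ)^(k+1) * iteratedDeriv (k+1) v x)
          ≤ x^(k+1) * (a/(x/2)) := key
        _ = 2^(k+1) * ((x/2)^k * a) := e3
        _ ≤ 2^(k+1) * (C * v (x/2/2^k)) := by
            apply mul_le_mul_of_nonneg_left e4 (by positivity)
        _ = 2^(k+1) * C * v (x / 2^(k+1)) := by rw [e5]; ring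
  -- main pointwise bound on derivatives of u
  have hP : ∀ k : ℕ, ∃ D : ℝ, 0 ≤ D ∧ ∀ x ∈ Set.Ioi (0:ℝ),
      x ^ (k+1) * |iteratedDeriv k u x| ≤ D * ((1+x)^k * v (x / 2^k)) := by
    intro k
    induction k with
    | zero =>
      refine ⟨1, zero_le_one, fun x hx => ?_⟩
      have hx0 : (0:ℝ) < x := hx
      simp only [iteratedDeriv_zero, pow_one, pow_zero, one_mul, pow_zero, div_one]
      rw [abs_of_nonneg (hnn x hx0)]
      exact le_of_eq (by simp [hv])
    | succ k ih =>
      obtain ⟨D, hD0, hD⟩ := ih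
      obtain ⟨C, hC0, hC⟩ := hB (k+1)
      refine ⟨C + ((k:ℝ)+1) * D, by positivity, fun x hx => ?_⟩
      have hx0 : (0:ℝ) < x := hx
      have hid : x * iteratedDeriv (k+1) u x
          = iteratedDeriv (k+1) v x - ((k:ℝ)+1) * iteratedDeriv k u x := by
        have := hL k x hx
        linarith
      have habs : |x * iteratedDeriv (k+1) u x|
          ≤ |iteratedDeriv (k+1) v x| + ((k:ℝ)+1) * |iteratedDeriv k u x| := by
        rw [hid]
        refine (abs_sub _ _).trans ?_
        rw [abs_mul, abs_of_nonneg (by positivity : (0:ℝ) ≤ (k:ℝ)+1)]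
      have hDv : |iteratedDeriv (k+1) v x| = (-1:ℝ)^(k+1) * iteratedDeriv (k+1) v x := by
        calc |iteratedDeriv (k+1) v x|
            = |(-1:ℝ)^(k+1) * iteratedDeriv (k+1) v x| := by
              rw [abs_mul, abs_pow, abs_neg, abs_one, one_pow, one_mul]
          _ = (-1:ℝ)^(k+1) * iteratedDeriv (k+1) v x := abs_of_nonneg (hCM (k+1) x hx0)
      have hmemk : x / 2^k ∈ Set.Ioi (0:ℝ) := by
        simp only [Set.mem_Ioi]
        positivity
      have hmemk1 : x / 2^(k+1) ∈ Set.Ioi (0:ℝ) := by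
        simp only [Set.mem_Ioi]
        positivity
      have hvmono : v (x / 2^k) ≤ v (x / 2^(k+1)) := by
        apply hvanti hmemk1 hmemk
        gcongr <;> first | exact hx0.le | norm_num
      have h1x : (1:ℝ) ≤ 1 + x := by linarith
      have e0 : x^(k+1+1) * |iteratedDeriv (k+1) u x|
          = x^(k+1) * |x * iteratedDeriv (k+1) u x| := by
        rw [abs_mul, abs_of_nonneg hx0.le]
        ring
      have t1 : x^(k+1) * |iteratedDeriv (k+1) v x| ≤ C * v (x/2^(k+1)) := by
        rw [hDv]
        exact hC x hx
      have t2 : x^(k+1) * |iteratedDeriv k u x| ≤ D * ((1+x)^k * v (x/2^k)) := hD x hx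
      have hvnn1 : 0 ≤ v (x/2^(k+1)) := hvnn _ hmemk1
      have hvnnk : 0 ≤ v (x/2^k) := hvnn _ hmemk
      have t3 : (1+x)^k * v (x/2^k) ≤ (1+x)^(k+1) * v (x/2^(k+1)) := by
        apply mul_le_mul _ hvmono hvnnk (by positivity)
        exact pow_le_pow_right₀ h1x (Nat.le_succ k)
      have t4 : C * v (x/2^(k+1)) ≤ C * ((1+x)^(k+1) * v (x/2^(k+1))) := by
        apply mul_le_mul_of_nonneg_left _ hC0
        nlinarith [one_le_pow₀ h1x (n := k+1)]
      calc x^(k+1+1) * |iteratedDeriv (k+1) u x|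
          = x^(k+1) * |x * iteratedDeriv (k+1) u x| := e0
        _ ≤ x^(k+1) * (|iteratedDeriv (k+1) v x| + ((k:ℝ)+1) * |iteratedDeriv k u x|) :=
            mul_le_mul_of_nonneg_left habs (pow_nonneg hx0.le _)
        _ = x^(k+1) * |iteratedDeriv (k+1) v x|
            + ((k:ℝ)+1) * (x^(k+1) * |iteratedDeriv k u x|) := by ring
        _ ≤ C * v (x/2^(k+1)) + ((k:ℝ)+1) * (D * ((1+x)^k * v (x/2^k))) := by
            apply add_le_add t1
            exact mul_le_mul_of_nonneg_left t2 (by positivity)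
        _ ≤ C * ((1+x)^(k+1) * v (x/2^(k+1)))
            + ((k:ℝ)+1) * (D * ((1+x)^(k+1) * v (x/2^(k+1)))) := by
            apply add_le_add t4
            apply mul_le_mul_of_nonneg_left _ (by positivity)
            exact mul_le_mul_of_nonneg_left t3 hD0
        _ = (C + ((k:ℝ)+1) * D) * ((1+x)^(k+1) * v (x / 2^(k+1))) := by ring
  -- final integrability
  intro n r hr k hk
  clear hk
  obtain ⟨D, hD0, hD⟩ := hP k
  set c : ℝ := 2 ^ k with hc
  have hc0 : (0:ℝ) < c := by positivity
  have hvcont : ContinuousOn v (Set.Ioi 0) := hsmooth.continuousOn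
  have hucont : ContinuousOn (iteratedDeriv k u) (Set.Ioi 0) :=
    (aux_contDiffOn_iteratedDeriv hopen husmooth k).continuousOn
  set G : ℝ → ℝ := fun y => Real.exp (-r * (c * y)) * ((1 + c * y)^k * v y) with hG
  have hGcont : ContinuousOn G (Set.Ioi 0) := by
    apply ContinuousOn.mul
    · exact (Real.continuous_exp.comp (continuous_const.mul (continuous_const.mul continuous_id))).continuousOn
    · exact ContinuousOn.mul (by fun_prop) hvcont
  have hGnn : ∀ y : ℝ, y ∈ Set.Ioi (0:ℝ) → 0 ≤ G y := by
    intro y hy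
    have hy0' : (0:ℝ) < y := hy
    have h1 : (0:ℝ) ≤ 1 + c * y := by nlinarith [mul_pos hc0 hy0']
    exact mul_nonneg (Real.exp_pos _).le (mul_nonneg (pow_nonneg h1 k) (hvnn y hy))
  have hGint : IntegrableOn G (Set.Ioi 0) := by
    rw [← Set.Ioc_union_Ioi_eq_Ioi (zero_le_one (α := ℝ)), integrableOn_union]
    constructor
    · apply Integrable.mono' (g := fun y => (1+c)^k * (min 1 y * u y))
      · exact (hint.mono_set Set.Ioc_subset_Ioi_self).const_mul _
      · exact (hGcont.mono (fun y hy => hy.1)).aestronglyMeasurable measurableSet_Ioc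
      · rw [ae_restrict_iff' measurableSet_Ioc]
        filter_upwards with y hy
        obtain ⟨hy0, hy1⟩ := hy
        have hvy : 0 ≤ v y := hvnn y hy0
        have hGy : 0 ≤ G y := hGnn y hy0
        rw [Real.norm_eq_abs, abs_of_nonneg hGy]
        have h1 : Real.exp (-r * (c*y)) ≤ 1 := by
          rw [Real.exp_le_one_iff]
          nlinarith [mul_pos hr (mul_pos hc0 hy0)]
        have h2 : (1 + c*y)^k ≤ (1+c)^k := by
          apply pow_le_pow_left₀ (by positivity)
          nlinarith
        have h3 : min 1 y * u y = v y := by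
          rw [min_eq_right hy1, hv]
        rw [h3]
        calc G y ≤ 1 * ((1+c)^k * v y) := by
              apply mul_le_mul h1 (mul_le_mul_of_nonneg_right h2 hvy) (by positivity) zero_le_one
          _ = (1+c)^k * v y := by ring
    · apply Integrable.mono' (g := fun y => (v 1 * (1+c)^k) * (y^k * Real.exp (-(r*c) * y)))
      · have base : IntegrableOn (fun y : ℝ => y ^ (k:ℝ) * Real.exp (-(r*c) * y ^ (1:ℝ)))
            (Set.Ioi 0) :=
          integrableOn_rpow_mul_exp_neg_mul_rpow
            (lt_of_lt_of_le neg_one_lt_zero (Nat.cast_nonneg k)) zero_lt_one (by positivity)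
        simp only [Real.rpow_natCast, Real.rpow_one] at base
        exact (base.mono_set (Set.Ioi_subset_Ioi zero_le_one)).const_mul _
      · exact (hGcont.mono (Set.Ioi_subset_Ioi zero_le_one)).aestronglyMeasurable measurableSet_Ioi
      · rw [ae_restrict_iff' measurableSet_Ioi]
        filter_upwards with y hy
        have hy1 : (1:ℝ) < y := hy
        have hy0 : y ∈ Set.Ioi (0:ℝ) := lt_trans zero_lt_one hy1
        have hvy : 0 ≤ v y := hvnn y hy0
        have hGy : 0 ≤ G y := hGnn y hy0
        rw [Real.norm_eq_abs, abs_of_nonneg hGy]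
        have h1 : v y ≤ v 1 := hvanti (Set.mem_Ioi.mpr zero_lt_one) hy0 hy1.le
        have h2 : (1 + c*y)^k ≤ (1+c)^k * y^k := by
          rw [← mul_pow]
          apply pow_le_pow_left₀ (by positivity)
          nlinarith
        have h3 : Real.exp (-r * (c*y)) = Real.exp (-(r*c) * y) := by
          ring_nf
        rw [hG]
        simp only []
        rw [h3]
        have hv1 : 0 ≤ v 1 := hvnn 1 (Set.mem_Ioi.mpr zero_lt_one)
        calc Real.exp (-(r*c) * y) * ((1 + c * y)^k * v y)
            ≤ Real.exp (-(r*c) * y) * (((1+c)^k * y^k) * v 1) := by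
              apply mul_le_mul_of_nonneg_left _ (Real.exp_pos _).le
              apply mul_le_mul h2 h1 hvy (by positivity)
          _ = (v 1 * (1+c)^k) * (y^k * Real.exp (-(r*c) * y)) := by ring
  have hφ : IntegrableOn (fun x => G (c⁻¹ * x)) (Set.Ioi 0) := by
    rw [integrableOn_Ioi_comp_mul_left_iff G 0 (by positivity : (0:ℝ) < c⁻¹)]
    simpa using hGint
  refine Integrable.mono' (hφ.const_mul D) ?_ ?_
  · apply ContinuousOn.aestronglyMeasurable _ measurableSet_Ioi
    apply ContinuousOn.mul
    · apply ContinuousOn.mul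
      · exact (Real.continuous_exp.comp (continuous_const.mul continuous_id)).continuousOn
      · exact (continuous_pow _).continuousOn
    · exact hucont.abs
  · rw [ae_restrict_iff' measurableSet_Ioi]
    filter_upwards with x hx
    have hx0 : (0:ℝ) < x := hx
    have hFnn : 0 ≤ Real.exp (-r * x) * x ^ (k + 1) * |iteratedDeriv k u x| := by positivity
    rw [Real.norm_eq_abs, abs_of_nonneg hFnn]
    have hGx : G (c⁻¹ * x) = Real.exp (-r * x) * ((1 + x)^k * v (x / c)) := by
      rw [hG]
      simp only []
      rw [mul_inv_cancel_left₀ (ne_of_gt hc0), inv_mul_eq_div]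
    have hbd := hD x hx
    calc Real.exp (-r * x) * x ^ (k + 1) * |iteratedDeriv k u x|
        = Real.exp (-r * x) * (x ^ (k + 1) * |iteratedDeriv k u x|) := by ring
      _ ≤ Real.exp (-r * x) * (D * ((1+x)^k * v (x / c))) :=
          mul_le_mul_of_nonneg_left hbd (Real.exp_pos _).le
      _ = D * G (c⁻¹ * x) := by rw [hGx]; ring
end

section
/- Suppose n ≥ 2, c > 0, u : (0,∞) → ℝ is n-times continuously differentiable and ∫₀^∞ e^{-cx} x^{k+1}|u^{(k)}(x)| dx < ∞ for k = 0,…,n. Then for every real θ > c, lim_{x→0} e^{-θx} xⁿ u^{(n-2)}(x) = 0 and lim_{x→∞} e^{-θx} xⁿ u^{(n-2)}(x) = 0. -/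
/-!
Write `g(x) = e^{-θx} xⁿ u^{(n-2)}(x) = x F(x)` with `F(x) = e^{-θx} x^{n-1} u^{(n-2)}(x)`.
Since `x e^{-(θ-c)x}` is bounded on `(0, ∞)`, the hypotheses make both `F` and `g'` integrable
there. An integrable derivative forces `g` to have limits at `0⁺` and at `∞`, and a nonzero
limit `α` would give `|F(x)| ≥ |α| / (2x)` near that end, contradicting the integrability of `F`
because `x⁻¹` is integrable neither near `0` nor near `∞`.
-/

open MeasureTheory Real Filter

open Set Topology

theorem hasDerivAt_iteratedDeriv_of_contDiffOn {𝕜 F : Type*} [NontriviallyNormedField 𝕜]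
    [NormedAddCommGroup F] [NormedSpace 𝕜 F] {f : 𝕜 → F} {s : Set 𝕜} {n k : ℕ} {x : 𝕜}
    (hf : ContDiffOn 𝕜 n f s) (hs : IsOpen s) (hk : k < n) (hx : x ∈ s) :
    HasDerivAt (iteratedDeriv k f) (iteratedDeriv (k + 1) f x) x := by
  have hdiff := (hf.differentiableOn_iteratedDerivWithin (by exact_mod_cast hk) hs.uniqueDiffOn
    x hx).differentiableAt (hs.mem_nhds hx)
  rw [iteratedDeriv_succ]
  exact (((iteratedDerivWithin_of_isOpen hs).eventuallyEq_of_mem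
    (hs.mem_nhds hx)).differentiableAt_iff.mp hdiff).hasDerivAt

theorem tendsto_nhdsGT_of_hasDerivAt_of_integrableOn_Ioc {E : Type*} [NormedAddCommGroup E]
    [NormedSpace ℝ E] [CompleteSpace E] {g g' : ℝ → E} {a b : ℝ} (hab : a < b)
    (hderiv : ∀ x ∈ Ioc a b, HasDerivAt g (g' x) x) (hint : IntegrableOn g' (Ioc a b)) :
    Tendsto g (𝓝[>] a) (𝓝 (g b - ∫ t in a..b, g' t)) := by
  have hprim : ContinuousOn (fun x => ∫ t in x..b, g' t) (Icc a b) := by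
    rw [← uIcc_of_le hab.le]
    exact intervalIntegral.continuousOn_primitive_interval_left
      (by rwa [uIcc_of_le hab.le, integrableOn_Icc_iff_integrableOn_Ioc])
  have hlim : Tendsto (fun x => g b - ∫ t in x..b, g' t) (𝓝[>] a)
      (𝓝 (g b - ∫ t in a..b, g' t)) := by
    refine tendsto_const_nhds.sub ?_
    rw [← nhdsWithin_Ioc_eq_nhdsGT hab]
    exact (hprim a (left_mem_Icc.mpr hab.le)).mono Ioc_subset_Icc_self
  refine hlim.congr' ?_
  filter_upwards [Ioc_mem_nhdsGT hab] with x hx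
  rw [intervalIntegral.integral_eq_sub_of_hasDerivAt (fun y hy => hderiv y ?_)
    ((intervalIntegrable_iff_integrableOn_Ioc_of_le hx.2).mpr (hint.mono_set ?_))]
  · abel
  · exact Ioc_subset_Ioc_left hx.1.le
  · rw [uIcc_of_le hx.2] at hy; exact ⟨hx.1.trans_le hy.1, hy.2⟩

theorem not_integrableAtFilter_inv_atTop :
    ¬ IntegrableAtFilter (fun x : ℝ => x⁻¹) atTop := by
  simpa [Real.rpow_neg_one] using (integrableAtFilter_rpow_atTop_iff (s := -1)).not

theorem not_integrableAtFilter_inv_nhdsGT_zero :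
    ¬ IntegrableAtFilter (fun x : ℝ => x⁻¹) (𝓝[>] 0) := by
  rintro ⟨s, hs, hint⟩
  obtain ⟨δ, hδ, hsub⟩ := mem_nhdsGT_iff_exists_Ioo_subset.mp hs
  have : IntegrableOn (fun x : ℝ => x ^ (-1 : ℝ)) (Ioo 0 δ) := by
    simpa [Real.rpow_neg_one] using hint.mono_set hsub
  exact lt_irrefl _ ((intervalIntegral.integrableOn_Ioo_rpow_iff hδ).mp this)

theorem eq_zero_of_tendsto_mul_of_integrableAtFilter {l : Filter ℝ} [l.IsMeasurablyGenerated]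
    {F : ℝ → ℝ} {α : ℝ} (hinv : ¬ IntegrableAtFilter (fun x => x⁻¹) l)
    (hF : IntegrableAtFilter F l) (hlim : Tendsto (fun x => x * F x) l (𝓝 α)) : α = 0 := by
  by_contra hα
  have hα' : 0 < |α| := abs_pos.mpr hα
  obtain ⟨s, hsl, hs, hbound⟩ :=
    ((tendsto_order.1 hlim.abs).1 _ (half_lt_self hα')).exists_measurable_mem
  obtain ⟨t, htl, hFt⟩ := hF
  refine hinv ⟨s ∩ t, inter_mem hsl htl, ?_⟩
  have hdom : Integrable (fun x => 2 / |α| * ‖F x‖) ((volume.restrict t).restrict s) :=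
    (hFt.norm.const_mul _).restrict
  have hinv_int : Integrable (fun x : ℝ => x⁻¹) ((volume.restrict t).restrict s) := by
    refine hdom.mono' measurable_inv.aestronglyMeasurable (ae_restrict_of_forall_mem hs ?_)
    intro x hx
    have h := hbound x hx
    rw [abs_mul] at h
    have hx0 : 0 < |x| := abs_pos.mpr (by rintro rfl; simp at h; linarith)
    rw [norm_inv, Real.norm_eq_abs, Real.norm_eq_abs]
    field_simp
    nlinarith
  rwa [Measure.restrict_restrict hs] at hinv_int

theorem tendsto_mul_zero_of_hasDerivAt_of_integrableOn {F g' : ℝ → ℝ}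
    (hderiv : ∀ x ∈ Ioi 0, HasDerivAt (fun x => x * F x) (g' x) x)
    (hg' : IntegrableOn g' (Ioi 0)) (hF : IntegrableOn F (Ioi 0)) :
    Tendsto (fun x => x * F x) (𝓝[>] 0) (𝓝 0) ∧ Tendsto (fun x => x * F x) atTop (𝓝 0) := by
  constructor
  · have h := tendsto_nhdsGT_of_hasDerivAt_of_integrableOn_Ioc one_pos
      (fun x hx => hderiv x hx.1) (hg'.mono_set Ioc_subset_Ioi_self)
    rwa [eq_zero_of_tendsto_mul_of_integrableAtFilter not_integrableAtFilter_inv_nhdsGT_zero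
      ⟨Ioi 0, self_mem_nhdsWithin, hF⟩ h] at h
  · have h := tendsto_limUnder_of_hasDerivAt_of_integrableOn_Ioi hderiv hg'
    rwa [eq_zero_of_tendsto_mul_of_integrableAtFilter not_integrableAtFilter_inv_atTop
      ⟨Ioi 0, Ioi_mem_atTop 0, hF⟩ h] at h

section ExpWeight

variable {c θ : ℝ} {f : ℝ → ℝ} {k : ℕ}

theorem integrableOn_exp_mul_pow_mul_of_abs (hf : ContinuousOn f (Ioi 0))
    (h : IntegrableOn (fun x => exp (-c * x) * x ^ k * |f x|) (Ioi 0)) :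
    IntegrableOn (fun x => exp (-c * x) * x ^ k * f x) (Ioi 0) := by
  refine h.mono' (((by fun_prop : Continuous fun x => exp (-c * x) * x ^ k).continuousOn.mul
    hf).aestronglyMeasurable measurableSet_Ioi) (ae_restrict_of_forall_mem measurableSet_Ioi ?_)
  intro x hx
  rw [Real.norm_eq_abs, abs_mul, abs_mul, abs_of_pos (exp_pos _), abs_of_pos (pow_pos hx _)]

theorem MeasureTheory.IntegrableOn.exp_neg_mul_pow_mul_of_le (hcθ : c ≤ θ)
    (h : IntegrableOn (fun x => exp (-c * x) * x ^ k * f x) (Ioi 0)) :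
    IntegrableOn (fun x => exp (-θ * x) * x ^ k * f x) (Ioi 0) := by
  have hbdd : ∀ x ∈ Ioi (0 : ℝ), ‖exp (-(θ - c) * x)‖ ≤ 1 := by
    intro x hx
    rw [Real.norm_eq_abs, abs_of_pos (exp_pos _), exp_le_one_iff]
    nlinarith [mem_Ioi.mp hx]
  refine IntegrableOn.congr_fun (h.bdd_mul (by fun_prop)
    (ae_restrict_of_forall_mem measurableSet_Ioi hbdd)) (fun x _ => ?_) measurableSet_Ioi
  rw [show -θ * x = -(θ - c) * x + -c * x by ring, exp_add]
  ring

theorem MeasureTheory.IntegrableOn.exp_neg_mul_pow_succ_mul (hcθ : c < θ)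
    (h : IntegrableOn (fun x => exp (-c * x) * x ^ k * f x) (Ioi 0)) :
    IntegrableOn (fun x => exp (-θ * x) * x ^ (k + 1) * f x) (Ioi 0) := by
  have hθc : 0 < θ - c := sub_pos.mpr hcθ
  have hbdd : ∀ x ∈ Ioi (0 : ℝ), ‖x * exp (-(θ - c) * x)‖ ≤ exp (-1) / (θ - c) := by
    intro x hx
    rw [Real.norm_eq_abs, abs_of_pos (mul_pos hx (exp_pos _)), le_div_iff₀ hθc]
    have h := mul_exp_neg_le_exp_neg_one ((θ - c) * x)
    rw [← neg_mul] at h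
    linarith
  refine IntegrableOn.congr_fun (h.bdd_mul (by fun_prop)
    (ae_restrict_of_forall_mem measurableSet_Ioi hbdd)) (fun x _ => ?_) measurableSet_Ioi
  rw [show -θ * x = -(θ - c) * x + -c * x by ring, exp_add]
  ring

theorem hasDerivAt_exp_neg_mul_pow_succ_mul {f' x : ℝ} (θ : ℝ) (k : ℕ)
    (hf : HasDerivAt f f' x) :
    HasDerivAt (fun x => exp (-θ * x) * x ^ (k + 1) * f x)
      ((k + 1) * (exp (-θ * x) * x ^ k * f x) - θ * (exp (-θ * x) * x ^ (k + 1) * f x)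
        + exp (-θ * x) * x ^ (k + 1) * f') x := by
  refine ((((hasDerivAt_id' x).const_mul (-θ)).exp.mul
    (hasDerivAt_pow (k + 1) x)).mul hf).congr_deriv ?_
  simp only [Pi.mul_apply]
  push_cast
  ring

end ExpWeight

theorem stmt16_general (n : ℕ) (hn : 2 ≤ n) (c : ℝ) (u : ℝ → ℝ)
    (hsmooth : ContDiffOn ℝ n u (Set.Ioi 0))
    (hint : ∀ k ≤ n,
      IntegrableOn (fun x => Real.exp (-c * x) * x ^ (k + 1) * |iteratedDeriv k u x|) (Set.Ioi 0))
    (θ : ℝ) (hθ : c < θ) :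
    Tendsto (fun x : ℝ => Real.exp (-θ * x) * x ^ n * iteratedDeriv (n - 2) u x)
      (nhdsWithin 0 (Set.Ioi 0)) (nhds 0) ∧
    Tendsto (fun x : ℝ => Real.exp (-θ * x) * x ^ n * iteratedDeriv (n - 2) u x)
      atTop (nhds 0) := by
  obtain ⟨m, rfl⟩ : ∃ m, n = m + 2 := ⟨n - 2, by omega⟩
  rw [Nat.add_sub_cancel]
  have hderiv : ∀ k < m + 2, ∀ x ∈ Ioi (0 : ℝ),
      HasDerivAt (iteratedDeriv k u) (iteratedDeriv (k + 1) u x) x :=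
    fun k hk x hx => hasDerivAt_iteratedDeriv_of_contDiffOn hsmooth isOpen_Ioi hk hx
  have hweighted : ∀ k < m + 2,
      IntegrableOn (fun x => exp (-c * x) * x ^ (k + 1) * iteratedDeriv k u x) (Ioi 0) :=
    fun k hk => integrableOn_exp_mul_pow_mul_of_abs
      (fun x hx => (hderiv k hk x hx).continuousAt.continuousWithinAt) (hint k hk.le)
  have hv := hweighted m (by omega)
  have hF := hv.exp_neg_mul_pow_mul_of_le hθ.le
  have hg' := ((hF.const_mul (((m + 1 : ℕ) : ℝ) + 1)).sub
    ((hv.exp_neg_mul_pow_succ_mul hθ).const_mul θ)).add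
    ((hweighted (m + 1) (by omega)).exp_neg_mul_pow_mul_of_le hθ.le)
  have hsplit : (fun x => exp (-θ * x) * x ^ (m + 2) * iteratedDeriv m u x)
      = fun x => x * (exp (-θ * x) * x ^ (m + 1) * iteratedDeriv m u x) := by
    funext x; ring
  rw [hsplit]
  refine tendsto_mul_zero_of_hasDerivAt_of_integrableOn (fun x hx => ?_) hg' hF
  rw [← hsplit]
  exact hasDerivAt_exp_neg_mul_pow_succ_mul θ (m + 1) (hderiv m (by omega) x hx)

theorem stmt16 (n : ℕ) (hn : 2 ≤ n) (c : ℝ) (hc : 0 < c) (u : ℝ → ℝ)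
    (hsmooth : ContDiffOn ℝ n u (Set.Ioi 0))
    (hint : ∀ k ≤ n,
      IntegrableOn (fun x => Real.exp (-c * x) * x ^ (k + 1) * |iteratedDeriv k u x|) (Set.Ioi 0))
    (θ : ℝ) (hθ : c < θ) :
    Tendsto (fun x : ℝ => Real.exp (-θ * x) * x ^ n * iteratedDeriv (n - 2) u x)
      (nhdsWithin 0 (Set.Ioi 0)) (nhds 0) ∧
    Tendsto (fun x : ℝ => Real.exp (-θ * x) * x ^ n * iteratedDeriv (n - 2) u x)
      atTop (nhds 0) :=
  stmt16_general n hn c u hsmooth hint θ hθ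
end
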